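/- Let g: ℝ^{n×R} → ℝ^{n×R} be defined by g(P) = diag(α)(1_n cᵀ + γ 1_n 1_nᵀ Ã P)/(1ᵀc + nγ) + (I - diag(α)) P Δ, where Ã is row-stochastic, Δ is row-stochastic with some entrywise positive column, α ∈ (0,1)^n, c ≻ 0, γ > 0. Then g maps S_{nR}(1_n) into itself and is a contraction in ‖·‖_∞ with constant η = max_i (α_i nγ/(1ᵀc + nγ) + (1-α_i)ζ(Δ)) < 1, where ζ(Δ) = 1 - Σ_r min_s δ_{sr}; hence g has a unique fixed point in S_{nR}(1_n) and iterates converge to it exponentially. -/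

import Mathlib

/-!
On the row-stochastic set the rows of `P - Q` sum to zero, so right multiplication by `Δ`
only sees `Δ` minus its column minima, whose rows sum to `ζ(Δ)`: it shrinks the `ℓ¹` norm of
each row by the factor `ζ(Δ)`. The other term of `g` depends on `P` only through the column
sums of `Ã P`, whose `ℓ¹` norm is at most `n ‖P - Q‖∞` because `Ã` is row-stochastic. Hence
row `i` of `g P - g Q` has `ℓ¹` norm at most `η_i ‖P - Q‖∞`, where `η_i` is a convex
combination of `nγ / (1ᵀc + nγ) < 1` and `ζ(Δ) < 1`, and the Banach fixed point theorem on
the closed set of row-stochastic matrices gives the fixed point and the geometric rate.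
-/

/-- The closed-loop map of the competitive seeding game at the Nash equilibrium. -/
noncomputable def seedingG (n R : ℕ) (α : Fin n → ℝ) (Atil : Matrix (Fin n) (Fin n) ℝ)
    (Δ : Matrix (Fin R) (Fin R) ℝ) (c : Fin R → ℝ) (γ : ℝ)
    (P : Matrix (Fin n) (Fin R) ℝ) : Matrix (Fin n) (Fin R) ℝ :=
  Matrix.of fun i r =>
    α i * (c r + γ * ∑ k, ∑ j, Atil k j * P j r) / ((∑ s, c s) + n * γ)
    + (1 - α i) * ∑ s, P i s * Δ s r

/-- Max absolute row sum (induced ∞-norm). -/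
noncomputable def normInf {n R : ℕ} (M : Matrix (Fin n) (Fin R) ℝ) : ℝ :=
  ⨆ i, ∑ r, |M i r|

open Finset Matrix Function Set

attribute [local instance] Matrix.linftyOpNormedAddCommGroup

theorem iSup_lt_of_forall_lt {ι : Type*} [Finite ι] {f : ι → ℝ} {a : ℝ} (ha : 0 < a)
    (h : ∀ i, f i < a) : ⨆ i, f i < a := by
  rcases isEmpty_or_nonempty ι with hι | hι
  · rwa [Real.iSup_of_isEmpty]
  · obtain ⟨i, hi⟩ := exists_eq_ciSup_of_finite (f := f)
    exact hi ▸ h i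

theorem LipschitzOnWith.exists_unique_isFixedPt {X : Type*} [MetricSpace X] {s : Set X}
    (hs : IsComplete s) (hne : s.Nonempty) {f : X → X} (hf : MapsTo f s s) {K : NNReal}
    (hK : K < 1) (hLip : LipschitzOnWith K f s) : ∃! p, p ∈ s ∧ IsFixedPt f p := by
  have hC : ContractingWith K (hf.restrict f s s) :=
    ⟨hK, hf.lipschitzOnWith_iff_restrict.1 hLip⟩
  obtain ⟨x, hx⟩ := hne
  obtain ⟨p, hp, hfp, -⟩ := hC.exists_fixedPoint' hs hf hx (edist_ne_top _ _)
  refine ⟨p, ⟨hp, hfp⟩, fun q ⟨hq, hfq⟩ => ?_⟩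
  exact congrArg Subtype.val <|
    hC.fixedPoint_unique' (x := ⟨q, hq⟩) (y := ⟨p, hp⟩) (Subtype.ext hfq) (Subtype.ext hfp)

theorem LipschitzOnWith.dist_iterate_le_of_isFixedPt {X : Type*} [PseudoMetricSpace X]
    {s : Set X} {f : X → X} {K : NNReal} (hLip : LipschitzOnWith K f s) (hf : MapsTo f s s)
    {x p : X} (hx : x ∈ s) (hp : p ∈ s) (hfp : IsFixedPt f p) (t : ℕ) :
    dist (f^[t] x) p ≤ K ^ t * dist x p := by
  induction t with
  | zero => simp
  | succ t ih =>
    calc dist (f^[t + 1] x) p = dist (f (f^[t] x)) (f p) := by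
          rw [iterate_succ_apply', hfp.eq]
      _ ≤ K * dist (f^[t] x) p := hLip.dist_le_mul _ (hf.iterate t hx) _ hp
      _ ≤ K * (K ^ t * dist x p) := by gcongr
      _ = K ^ (t + 1) * dist x p := by ring

section normInf

variable {n R : ℕ}

theorem sum_abs_le_normInf (M : Matrix (Fin n) (Fin R) ℝ) (i : Fin n) :
    ∑ r, |M i r| ≤ normInf M :=
  le_ciSup (f := fun i => ∑ r, |M i r|) (Finite.bddAbove_range _) i

theorem normInf_nonneg (M : Matrix (Fin n) (Fin R) ℝ) : 0 ≤ normInf M :=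
  Real.iSup_nonneg fun _ => sum_nonneg fun _ _ => abs_nonneg _

theorem normInf_le {M : Matrix (Fin n) (Fin R) ℝ} {C : ℝ} (hC : 0 ≤ C)
    (h : ∀ i, ∑ r, |M i r| ≤ C) : normInf M ≤ C :=
  Real.iSup_le h hC

theorem normInf_eq_norm (M : Matrix (Fin n) (Fin R) ℝ) : normInf M = ‖M‖ := by
  refine le_antisymm (normInf_le (norm_nonneg M) fun i => ?_) ?_
  · have := Finset.le_sup (f := fun i => ∑ r, ‖M i r‖₊) (mem_univ i)
    rw [← linfty_opNNNorm_def] at this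
    simpa [← NNReal.coe_le_coe] using this
  · rw [linfty_opNorm_def, ← Real.le_toNNReal_iff_coe_le (normInf_nonneg M)]
    refine Finset.sup_le fun i _ => (Real.le_toNNReal_iff_coe_le (normInf_nonneg M)).2 ?_
    simpa using sum_abs_le_normInf M i

end normInf

section Doeblin

variable {k : Type*} [Fintype k]

/-- The paper's `ζ(Δ)`: one minus the mass of the largest vector minorizing every row of `Δ`. -/
noncomputable def doeblinCoeff (Δ : Matrix k k ℝ) : ℝ := 1 - ∑ r, ⨅ s, Δ s r

theorem doeblinCoeff_nonneg {Δ : Matrix k k ℝ} (hΔ1 : ∀ s, ∑ r, Δ s r = 1) :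
    0 ≤ doeblinCoeff Δ := by
  rcases isEmpty_or_nonempty k with hk | ⟨⟨s₀⟩⟩
  · simp [doeblinCoeff]
  · have : ∑ r, ⨅ s, Δ s r ≤ ∑ r, Δ s₀ r :=
      sum_le_sum fun r _ => ciInf_le (Finite.bddBelow_range _) s₀
    rw [hΔ1 s₀] at this
    exact sub_nonneg.2 this

theorem doeblinCoeff_lt_one {Δ : Matrix k k ℝ} (hΔ0 : ∀ s r, 0 ≤ Δ s r)
    (hpos : ∃ r, ∀ s, 0 < Δ s r) : doeblinCoeff Δ < 1 := by
  obtain ⟨r₀, hr₀⟩ := hpos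
  have : Nonempty k := ⟨r₀⟩
  obtain ⟨s₀, hs₀⟩ := exists_eq_ciInf_of_finite (f := fun s => Δ s r₀)
  have : 0 < ∑ r, ⨅ s, Δ s r :=
    sum_pos' (fun r _ => le_ciInf fun s => hΔ0 s r) ⟨r₀, mem_univ _, hs₀ ▸ hr₀ s₀⟩
  rw [doeblinCoeff]
  linarith

theorem sum_abs_vecMul_le {Δ : Matrix k k ℝ} (hΔ1 : ∀ s, ∑ r, Δ s r = 1) {x : k → ℝ}
    (hx : ∑ s, x s = 0) :
    ∑ r, |(x ᵥ* Δ) r| ≤ doeblinCoeff Δ * ∑ s, |x s| := by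
  have hmin : ∀ s r, 0 ≤ Δ s r - ⨅ t, Δ t r := fun s r =>
    sub_nonneg.2 (ciInf_le (Finite.bddBelow_range _) s)
  -- since `x` sums to zero, each column of `Δ` may be shifted by its minimum
  have hshift : ∀ r, (x ᵥ* Δ) r = ∑ s, x s * (Δ s r - ⨅ t, Δ t r) := fun r => by
    simp only [vecMul, dotProduct, mul_sub, sum_sub_distrib, ← sum_mul, hx, zero_mul, sub_zero]
  calc ∑ r, |(x ᵥ* Δ) r| ≤ ∑ r, ∑ s, |x s| * (Δ s r - ⨅ t, Δ t r) := by
        refine sum_le_sum fun r _ => ?_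
        rw [hshift]
        refine (abs_sum_le_sum_abs _ _).trans_eq (sum_congr rfl fun s _ => ?_)
        rw [abs_mul, abs_of_nonneg (hmin s r)]
    _ = doeblinCoeff Δ * ∑ s, |x s| := by
        rw [sum_comm, mul_sum]
        refine sum_congr rfl fun s _ => ?_
        rw [← mul_sum, sum_sub_distrib, hΔ1 s, doeblinCoeff, mul_comm]

end Doeblin

theorem sum_abs_sum_mul_apply_le {l m k : Type*} [Fintype l] [Fintype m] [Fintype k]
    {A : Matrix l m ℝ} (hA0 : ∀ i j, 0 ≤ A i j) (hA1 : ∀ i, ∑ j, A i j = 1)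
    {Y : Matrix m k ℝ} {B : ℝ} (hY : ∀ j, ∑ r, |Y j r| ≤ B) :
    ∑ r, |∑ i, (A * Y) i r| ≤ Fintype.card l * B :=
  calc ∑ r, |∑ i, (A * Y) i r| ≤ ∑ r, ∑ i, ∑ j, A i j * |Y j r| := by
        refine sum_le_sum fun r _ => (abs_sum_le_sum_abs _ _).trans (sum_le_sum fun i _ => ?_)
        refine (abs_sum_le_sum_abs _ _).trans_eq (sum_congr rfl fun j _ => ?_)
        rw [abs_mul, abs_of_nonneg (hA0 i j)]
    _ = ∑ i, ∑ j, A i j * ∑ r, |Y j r| := by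
        simp only [mul_sum]
        rw [sum_comm]
        exact sum_congr rfl fun i _ => sum_comm
    _ ≤ ∑ i, ∑ j, A i j * B := by gcongr with i _ j _; exacts [hA0 i j, hY j]
    _ = Fintype.card l * B := by simp [← sum_mul, hA1]

def IsRowStochastic {m k : Type*} [Fintype k] (P : Matrix m k ℝ) : Prop :=
  (∀ i r, 0 ≤ P i r) ∧ ∀ i, ∑ r, P i r = 1

theorem isClosed_setOf_isRowStochastic (m k : Type*) [Fintype k] :
    IsClosed {P : Matrix m k ℝ | IsRowStochastic P} := by
  simp only [IsRowStochastic, Set.ofPred_and, Set.ofPred_forall]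
  exact (isClosed_iInter fun i => isClosed_iInter fun r =>
      isClosed_le continuous_const (by fun_prop)).inter
    (isClosed_iInter fun i => isClosed_eq (by fun_prop) continuous_const)

section Seeding

variable {n R : ℕ} {α : Fin n → ℝ} {Atil : Matrix (Fin n) (Fin n) ℝ}
  {Δ : Matrix (Fin R) (Fin R) ℝ} {c : Fin R → ℝ} {γ : ℝ}

/-- The paper's `η_i`, so that `η = max_i η_i`. -/
noncomputable def seedingRate (n R : ℕ) (α : Fin n → ℝ) (Δ : Matrix (Fin R) (Fin R) ℝ)
    (c : Fin R → ℝ) (γ : ℝ) (i : Fin n) : ℝ :=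
  α i * (n * γ) / ((∑ s, c s) + n * γ) + (1 - α i) * doeblinCoeff Δ

theorem seedingG_mapsTo (hα0 : ∀ i, 0 ≤ α i) (hα1 : ∀ i, α i ≤ 1)
    (hA0 : ∀ i j, 0 ≤ Atil i j) (hA1 : ∀ i, ∑ j, Atil i j = 1)
    (hΔ0 : ∀ r s, 0 ≤ Δ r s) (hΔ1 : ∀ r, ∑ s, Δ r s = 1)
    (hc : ∀ r, 0 ≤ c r) (hγ : 0 ≤ γ) (hD : (∑ s, c s) + n * γ ≠ 0) :
    MapsTo (seedingG n R α Atil Δ c γ) {P | IsRowStochastic P} {P | IsRowStochastic P} := by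
  rintro P ⟨hP0, hP1⟩
  have hcol : ∑ r, (c r + γ * ∑ k, ∑ j, Atil k j * P j r) = (∑ s, c s) + n * γ := by
    have : ∑ r, ∑ k, ∑ j, Atil k j * P j r = n := by
      rw [sum_comm]
      simp [sum_comm (γ := Fin R), ← mul_sum, hP1, hA1]
    rw [sum_add_distrib, ← mul_sum, this, mul_comm]
  have hPΔ : ∀ i, ∑ r, ∑ s, P i s * Δ s r = 1 := fun i => by
    rw [sum_comm]
    simp [← mul_sum, hΔ1, hP1]
  refine ⟨fun i r => ?_, fun i => ?_⟩
  · have := hα0 i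
    have := sub_nonneg.2 (hα1 i)
    have := hc r
    have : 0 ≤ ∑ s, c s := sum_nonneg fun s _ => hc s
    have : 0 ≤ ∑ k, ∑ j, Atil k j * P j r :=
      sum_nonneg fun k _ => sum_nonneg fun j _ => mul_nonneg (hA0 k j) (hP0 j r)
    have : 0 ≤ ∑ s, P i s * Δ s r := sum_nonneg fun s _ => mul_nonneg (hP0 i s) (hΔ0 s r)
    simp only [seedingG, of_apply]
    positivity
  · simp only [seedingG, of_apply, sum_add_distrib, ← sum_div, ← mul_sum, hcol, hPΔ,
      mul_div_assoc, div_self hD]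
    ring

theorem seedingG_sub_apply (P Q : Matrix (Fin n) (Fin R) ℝ) (i : Fin n) (r : Fin R) :
    seedingG n R α Atil Δ c γ P i r - seedingG n R α Atil Δ c γ Q i r =
      α i * γ / ((∑ s, c s) + n * γ) * ∑ k, (Atil * (P - Q)) k r
        + (1 - α i) * ((P - Q) i ᵥ* Δ) r := by
  simp only [seedingG, of_apply, Matrix.sub_apply, mul_apply, vecMul, dotProduct, mul_sub, sub_mul,
    sum_sub_distrib]
  ring

theorem sum_abs_seedingG_sub_le {i : Fin n} (hα0 : 0 ≤ α i) (hα1 : α i ≤ 1)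
    (hA0 : ∀ i j, 0 ≤ Atil i j) (hA1 : ∀ i, ∑ j, Atil i j = 1)
    (hΔ1 : ∀ r, ∑ s, Δ r s = 1) (hc : ∀ r, 0 ≤ c r) (hγ : 0 ≤ γ)
    {P Q : Matrix (Fin n) (Fin R) ℝ}
    (hPQ : ∑ r, P i r = ∑ r, Q i r) :
    ∑ r, |seedingG n R α Atil Δ c γ P i r - seedingG n R α Atil Δ c γ Q i r| ≤
      seedingRate n R α Δ c γ i * normInf (P - Q) := by
  have hD : 0 ≤ (∑ s, c s) + n * γ := by
    have : 0 ≤ ∑ s, c s := sum_nonneg fun s _ => hc s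
    positivity
  have hrow : ∑ s, (P - Q) i s = 0 := by simp [sum_sub_distrib, hPQ]
  calc ∑ r, |seedingG n R α Atil Δ c γ P i r - seedingG n R α Atil Δ c γ Q i r|
      ≤ ∑ r, (α i * γ / ((∑ s, c s) + n * γ) * |∑ k, (Atil * (P - Q)) k r|
          + (1 - α i) * |((P - Q) i ᵥ* Δ) r|) := by
        refine sum_le_sum fun r _ => ?_
        rw [seedingG_sub_apply]
        refine (abs_add_le _ _).trans_eq ?_
        have : 0 ≤ α i * γ / ((∑ s, c s) + n * γ) := by positivity
        rw [abs_mul, abs_mul, abs_of_nonneg this, abs_of_nonneg (sub_nonneg.2 hα1)]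
    _ = α i * γ / ((∑ s, c s) + n * γ) * ∑ r, |∑ k, (Atil * (P - Q)) k r|
          + (1 - α i) * ∑ r, |((P - Q) i ᵥ* Δ) r| := by
        rw [sum_add_distrib, mul_sum, mul_sum]
    _ ≤ α i * γ / ((∑ s, c s) + n * γ) * (Fintype.card (Fin n) * normInf (P - Q))
          + (1 - α i) * (doeblinCoeff Δ * normInf (P - Q)) := by
        have hA := sum_abs_sum_mul_apply_le hA0 hA1 (sum_abs_le_normInf (P - Q))
        have hΔ := (sum_abs_vecMul_le hΔ1 hrow).trans
          (mul_le_mul_of_nonneg_left (sum_abs_le_normInf _ i) (doeblinCoeff_nonneg hΔ1))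
        have := sub_nonneg.2 hα1
        gcongr
    _ = seedingRate n R α Δ c γ i * normInf (P - Q) := by
        rw [seedingRate, Fintype.card_fin]
        ring

theorem seedingRate_nonneg {i : Fin n} (hα0 : 0 ≤ α i) (hα1 : α i ≤ 1)
    (hΔ1 : ∀ r, ∑ s, Δ r s = 1) (hc : ∀ r, 0 ≤ c r) (hγ : 0 ≤ γ) :
    0 ≤ seedingRate n R α Δ c γ i := by
  have : 0 ≤ ∑ s, c s := sum_nonneg fun s _ => hc s
  have := doeblinCoeff_nonneg hΔ1
  have := sub_nonneg.2 hα1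
  unfold seedingRate
  positivity

theorem seedingRate_lt_one {i : Fin n} (hα0 : 0 ≤ α i) (hα1 : α i ≤ 1)
    (hΔ0 : ∀ r s, 0 ≤ Δ r s) (hpos : ∃ r, ∀ s, 0 < Δ s r) (hc : ∀ r, 0 < c r)
    (hγ : 0 ≤ γ) :
    seedingRate n R α Δ c γ i < 1 := by
  have hy := doeblinCoeff_lt_one hΔ0 hpos
  obtain ⟨r₀, -⟩ := hpos
  have hcsum : 0 < ∑ s, c s := sum_pos (fun r _ => hc r) ⟨r₀, mem_univ _⟩
  have hx : n * γ / ((∑ s, c s) + n * γ) < 1 := (div_lt_one (by positivity)).2 (by linarith)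
  have := sub_nonneg.2 hα1
  calc seedingRate n R α Δ c γ i
      = α i * (n * γ / ((∑ s, c s) + n * γ)) + (1 - α i) * doeblinCoeff Δ := by
        rw [seedingRate, mul_div_assoc]
    _ ≤ α i * max (n * γ / ((∑ s, c s) + n * γ)) (doeblinCoeff Δ)
        + (1 - α i) * max (n * γ / ((∑ s, c s) + n * γ)) (doeblinCoeff Δ) := by
        gcongr
        exacts [le_max_left _ _, le_max_right _ _]
    _ = max (n * γ / ((∑ s, c s) + n * γ)) (doeblinCoeff Δ) := by ring
    _ < 1 := max_lt hx hy

theorem normInf_seedingG_sub_le (hα0 : ∀ i, 0 ≤ α i) (hα1 : ∀ i, α i ≤ 1)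
    (hA0 : ∀ i j, 0 ≤ Atil i j) (hA1 : ∀ i, ∑ j, Atil i j = 1)
    (hΔ1 : ∀ r, ∑ s, Δ r s = 1) (hc : ∀ r, 0 ≤ c r) (hγ : 0 ≤ γ) {η : ℝ}
    (hη0 : 0 ≤ η)
    (hη : ∀ i, seedingRate n R α Δ c γ i ≤ η) {P Q : Matrix (Fin n) (Fin R) ℝ}
    (hP1 : ∀ i, ∑ r, P i r = 1) (hQ1 : ∀ i, ∑ r, Q i r = 1) :
    normInf (seedingG n R α Atil Δ c γ P - seedingG n R α Atil Δ c γ Q) ≤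
      η * normInf (P - Q) :=
  normInf_le (mul_nonneg hη0 (normInf_nonneg _)) fun i => by
    simpa only [Matrix.sub_apply] using
      (sum_abs_seedingG_sub_le (hα0 i) (hα1 i) hA0 hA1 hΔ1 hc hγ (by rw [hP1, hQ1])).trans
        (mul_le_mul_of_nonneg_right (hη i) (normInf_nonneg _))

end Seeding

theorem stmt_18 (n R : ℕ) (α : Fin n → ℝ) (hα : ∀ i, 0 < α i ∧ α i < 1)
    (Atil : Matrix (Fin n) (Fin n) ℝ)
    (hA0 : ∀ i j, 0 ≤ Atil i j) (hA1 : ∀ i, ∑ j, Atil i j = 1)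
    (Δ : Matrix (Fin R) (Fin R) ℝ)
    (hΔ0 : ∀ r s, 0 ≤ Δ r s) (hΔ1 : ∀ r, ∑ s, Δ r s = 1)
    (hpos : ∃ r, ∀ s, 0 < Δ s r)
    (c : Fin R → ℝ) (hc : ∀ r, 0 < c r) (γ : ℝ) (hγ : 0 < γ)
    (η : ℝ)
    (hη : η = ⨆ i, (α i * (n * γ) / ((∑ s, c s) + n * γ)
      + (1 - α i) * (1 - ∑ r, ⨅ s, Δ s r))) :
    (∀ P : Matrix (Fin n) (Fin R) ℝ, (∀ i r, 0 ≤ P i r) → (∀ i, ∑ r, P i r = 1) →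
      (∀ i r, 0 ≤ seedingG n R α Atil Δ c γ P i r) ∧
      (∀ i, ∑ r, seedingG n R α Atil Δ c γ P i r = 1)) ∧
    η < 1 ∧
    (∀ P Q : Matrix (Fin n) (Fin R) ℝ,
      (∀ i r, 0 ≤ P i r) → (∀ i, ∑ r, P i r = 1) →
      (∀ i r, 0 ≤ Q i r) → (∀ i, ∑ r, Q i r = 1) →
      normInf (seedingG n R α Atil Δ c γ P - seedingG n R α Atil Δ c γ Q) ≤
        η * normInf (P - Q)) ∧
    (∃! Pstar : Matrix (Fin n) (Fin R) ℝ,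
      ((∀ i r, 0 ≤ Pstar i r) ∧ (∀ i, ∑ r, Pstar i r = 1)) ∧
      seedingG n R α Atil Δ c γ Pstar = Pstar) ∧
    (∀ (Pstar P0 : Matrix (Fin n) (Fin R) ℝ),
      ((∀ i r, 0 ≤ Pstar i r) ∧ (∀ i, ∑ r, Pstar i r = 1)) →
      seedingG n R α Atil Δ c γ Pstar = Pstar →
      (∀ i r, 0 ≤ P0 i r) → (∀ i, ∑ r, P0 i r = 1) →
      ∀ t, normInf ((seedingG n R α Atil Δ c γ)^[t] P0 - Pstar) ≤
        η ^ t * normInf (P0 - Pstar)) := by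
  set g := seedingG n R α Atil Δ c γ
  set S := {P : Matrix (Fin n) (Fin R) ℝ | IsRowStochastic P}
  have hα0 i := (hα i).1.le
  have hα1 i := (hα i).2.le
  have hc0 r := (hc r).le
  obtain ⟨r₀, -⟩ := id hpos
  have hD : 0 < (∑ s, c s) + n * γ := by
    have := sum_pos (fun r _ => hc r) ⟨r₀, mem_univ _⟩
    positivity
  change η = ⨆ i, seedingRate n R α Δ c γ i at hη
  have hrate i : seedingRate n R α Δ c γ i ≤ η :=
    hη ▸ le_ciSup (Finite.bddAbove_range _) i
  have hη0 : 0 ≤ η :=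
    hη ▸ Real.iSup_nonneg fun i => seedingRate_nonneg (hα0 i) (hα1 i) hΔ1 hc0 hγ.le
  have hη1 : η < 1 := hη ▸ iSup_lt_of_forall_lt one_pos fun i =>
    seedingRate_lt_one (hα0 i) (hα1 i) hΔ0 hpos hc hγ.le
  have hmaps : MapsTo g S S := seedingG_mapsTo hα0 hα1 hA0 hA1 hΔ0 hΔ1 hc0 hγ.le hD.ne'
  have hcontr {P Q} (hP : P ∈ S) (hQ : Q ∈ S) : normInf (g P - g Q) ≤ η * normInf (P - Q) :=
    normInf_seedingG_sub_le hα0 hα1 hA0 hA1 hΔ1 hc0 hγ.le hη0 hrate hP.2 hQ.2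
  have hLip : LipschitzOnWith η.toNNReal g S := LipschitzOnWith.of_dist_le_mul fun P hP Q hQ => by
    simpa only [dist_eq_norm, ← normInf_eq_norm, Real.coe_toNNReal η hη0] using hcontr hP hQ
  refine ⟨fun P hP0 hP1 => hmaps ⟨hP0, hP1⟩, hη1,
    fun P Q hP0 hP1 hQ0 hQ1 => hcontr ⟨hP0, hP1⟩ ⟨hQ0, hQ1⟩, ?_, ?_⟩
  · have hne : S.Nonempty := ⟨of fun _ r => if r = r₀ then 1 else 0,
      fun _ r => by simp only [of_apply]; split_ifs <;> norm_num, fun _ => by simp⟩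
    exact hLip.exists_unique_isFixedPt (isClosed_setOf_isRowStochastic _ _).isComplete hne hmaps
      (Real.toNNReal_lt_one.2 hη1)
  · intro Pstar P0 hPstar hfix hP00 hP01 t
    simpa only [dist_eq_norm, ← normInf_eq_norm, Real.coe_toNNReal η hη0] using
      hLip.dist_iterate_le_of_isFixedPt hmaps ⟨hP00, hP01⟩ hPstar hfix t
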